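/- If m, n are coprime positive integers with 1 ≤ m/n ≤ 2 and 3 ∤ (m + n), then the triple (a, b, c) = (m(2n − m), n(2m − n), m² − mn + n²) is a primitive Eisenstein triple, i.e., a² − ab + b² = c², 0 ≤ a ≤ b, and gcd(a, b, c) = 1. -/

import Mathlib

/-!
Any prime dividing `a`, `b` and `c` divides `a + b + c = 3mn`. But `c ≡ n² (mod m)`,
`c ≡ m² (mod n)` and `c = (m + n)² - 3mn`, so `c` is coprime to `m`, to `n` and, as
`3 ∤ m + n`, to `3`.
-/

section CommRing

variable {R : Type*} [CommRing R]

theorem IsCoprime.sq_sub_mul_add_sq_mul {m n : R} (h : IsCoprime m n) :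
    IsCoprime (m ^ 2 - m * n + n ^ 2) (m * n) := by
  refine IsCoprime.mul_right ?_ ?_
  · have hc : m ^ 2 - m * n + n ^ 2 = n ^ 2 + m * (m - n) := by ring
    rw [hc, IsCoprime.add_mul_left_left_iff]
    exact h.symm.pow_left
  · have hc : m ^ 2 - m * n + n ^ 2 = m ^ 2 + n * (n - m) := by ring
    rw [hc, IsCoprime.add_mul_left_left_iff]
    exact h.pow_left

theorem IsCoprime.three_sq_sub_mul_add_sq {m n : R} (h : IsCoprime 3 (m + n)) :
    IsCoprime 3 (m ^ 2 - m * n + n ^ 2) := by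
  have hc : m ^ 2 - m * n + n ^ 2 = (m + n) ^ 2 + 3 * -(m * n) := by ring
  rw [hc]
  exact h.pow_right.add_mul_left_right _

end CommRing

theorem Int.gcd_gcd_eq_one_of_isCoprime_add {a b c : ℤ} (h : IsCoprime (a + b) c) :
    Int.gcd a (Int.gcd b c) = 1 := by
  set g := Int.gcd a (Int.gcd b c)
  have hga : (g : ℤ) ∣ a := Int.gcd_dvd_left _ _
  have hgbc : (g : ℤ) ∣ Int.gcd b c := Int.gcd_dvd_right _ _
  have hgb : (g : ℤ) ∣ b := hgbc.trans (Int.gcd_dvd_left _ _)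
  have hgc : (g : ℤ) ∣ c := hgbc.trans (Int.gcd_dvd_right _ _)
  have hg1 : g ∣ Int.gcd (a + b) c := Int.dvd_gcd (dvd_add hga hgb) hgc
  rwa [Int.isCoprime_iff_gcd_eq_one.mp h, Nat.dvd_one] at hg1

theorem stmt_4 (m n : ℤ) (hm : 0 < m) (hn : 0 < n) (hmn : Int.gcd m n = 1)
    (h1 : n ≤ m) (h2 : m ≤ 2 * n) (h3 : ¬ (3 : ℤ) ∣ m + n)
    (a b c : ℤ) (ha : a = m * (2 * n - m)) (hb : b = n * (2 * m - n))
    (hc : c = m ^ 2 - m * n + n ^ 2) :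
    a ^ 2 - a * b + b ^ 2 = c ^ 2 ∧ 0 ≤ a ∧ a ≤ b ∧ Int.gcd a (Int.gcd b c) = 1 := by
  subst ha hb hc
  refine ⟨by ring, mul_nonneg hm.le (by linarith), ?_, ?_⟩
  · have hba : n * (2 * m - n) - m * (2 * n - m) = (m - n) * (m + n) := by ring
    have hpos : 0 ≤ (m - n) * (m + n) := mul_nonneg (sub_nonneg.mpr h1) (add_pos hm hn).le
    linarith
  · have hco : IsCoprime m n := Int.isCoprime_iff_gcd_eq_one.mpr hmn
    have h3co : IsCoprime 3 (m + n) :=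
      Int.prime_three.irreducible.coprime_iff_not_dvd.mpr h3
    have hmul : IsCoprime (3 * (m * n)) (m ^ 2 - m * n + n ^ 2) :=
      h3co.three_sq_sub_mul_add_sq.mul_left hco.sq_sub_mul_add_sq_mul.symm
    have hsum : m * (2 * n - m) + n * (2 * m - n)
        = 3 * (m * n) + -1 * (m ^ 2 - m * n + n ^ 2) := by ring
    apply Int.gcd_gcd_eq_one_of_isCoprime_add
    rw [hsum]
    exact hmul.add_mul_right_left _
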